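/- Let μ be a probability distribution on {1,...,K} that is a mixture μ_k = p·μ^obs_k + (1−p)·μ^mis_k for some probability distribution μ^mis and p ∈ [0,1]. Then for every k, p·F_{μ^obs}(k) ≤ F_μ(k) ≤ p·F_{μ^obs}(k) + (1−p), and these bounds are sharp: for each k and each value t in this interval there exists a probability distribution μ^mis such that the resulting mixture μ satisfies F_μ(k) = t. -/

import Mathlib

open Finset

/-- `μ` is a probability distribution on `{1,...,K}` (indexed by `Fin K`). -/
def IsDist {K : ℕ} (μ : Fin K → ℝ) : Prop :=
  (∀ i, 0 ≤ μ i) ∧ ∑ i, μ i = 1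

/-- CDF of `μ` at threshold `k`: `F_μ(k) = ∑_{i ≤ k} μ_i`. -/
noncomputable def cdf {K : ℕ} (μ : Fin K → ℝ) (k : Fin K) : ℝ :=
  ∑ i ∈ Finset.univ.filter (fun i => i ≤ k), μ i

/-- Embedding of the first `K-1` thresholds into `Fin K`. -/
def emb {K : ℕ} (k : Fin (K - 1)) : Fin K :=
  ⟨k.val, lt_of_lt_of_le k.isLt (Nat.sub_le K 1)⟩

/-- `D(μ,ν) = ∑_{k=1}^{K-1} |F_μ(k) - F_ν(k)|`. -/
noncomputable def Ddist {K : ℕ} (μ ν : Fin K → ℝ) : ℝ :=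
  ∑ k : Fin (K - 1), |cdf μ (emb k) - cdf ν (emb k)|

/-- `π` is a coupling of `μ` and `ν`: nonnegative entries, row sums `μ`, column sums `ν`. -/
def IsCoupling {K : ℕ} (π : Fin K → Fin K → ℝ) (μ ν : Fin K → ℝ) : Prop :=
  (∀ i j, 0 ≤ π i j) ∧ (∀ i, ∑ j, π i j = μ i) ∧ (∀ j, ∑ i, π i j = ν j)

/-- Transport cost `∑_{i,j} |i-j| π_{ij}`. -/
noncomputable def cost {K : ℕ} (π : Fin K → Fin K → ℝ) : ℝ :=
  ∑ i : Fin K, ∑ j : Fin K, |(i : ℝ) - (j : ℝ)| * π i j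

/- The mixture's CDF is `p F_obs(k) + (1 - p) F_mis(k)`, where `F_mis(k)` ranges over `[0, 1]`:
every value is attained by putting mass `s` at the threshold `k` and `1 - s` at a later point. -/

lemma cdf_mix {K : ℕ} (p : ℝ) (μ ν : Fin K → ℝ) (k : Fin K) :
    cdf (fun i => p * μ i + (1 - p) * ν i) k = p * cdf μ k + (1 - p) * cdf ν k := by
  simp only [cdf, Finset.sum_add_distrib, Finset.mul_sum]

lemma IsDist.cdf_nonneg {K : ℕ} {μ : Fin K → ℝ} (h : IsDist μ) (k : Fin K) : 0 ≤ cdf μ k :=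
  Finset.sum_nonneg fun i _ => h.1 i

lemma IsDist.cdf_le_one {K : ℕ} {μ : Fin K → ℝ} (h : IsDist μ) (k : Fin K) : cdf μ k ≤ 1 :=
  h.2 ▸ Finset.sum_le_sum_of_subset_of_nonneg (Finset.filter_subset _ _) fun i _ _ => h.1 i

def twoPoint {K : ℕ} (k j : Fin K) (s : ℝ) : Fin K → ℝ :=
  Pi.single k s + Pi.single j (1 - s)

lemma isDist_twoPoint {K : ℕ} (k j : Fin K) {s : ℝ}
    (hs : s ∈ Set.Icc (0 : ℝ) 1) : IsDist (twoPoint k j s) := by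
  refine ⟨fun i => add_nonneg ?_ ?_, ?_⟩
  · exact Pi.single_nonneg (α := fun _ => ℝ) |>.2 hs.1 i
  · exact Pi.single_nonneg (α := fun _ => ℝ) |>.2 (sub_nonneg.2 hs.2) i
  · simp [twoPoint, Finset.sum_add_distrib]

lemma cdf_twoPoint {K : ℕ} {k j : Fin K} (hkj : k < j) (s : ℝ) :
    cdf (twoPoint k j s) k = s := by
  simp only [cdf, twoPoint, Pi.add_apply, Finset.sum_add_distrib, Finset.sum_pi_single']
  simp [hkj.not_ge]

lemma exists_isDist_cdf_eq {K : ℕ} {k j : Fin K} (hkj : k < j) {s : ℝ}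
    (hs : s ∈ Set.Icc (0 : ℝ) 1) : ∃ ν : Fin K → ℝ, IsDist ν ∧ cdf ν k = s :=
  ⟨_, isDist_twoPoint k j hs, cdf_twoPoint hkj s⟩

lemma exists_mem_Icc_eq_add_mul {a b t : ℝ} (hb : 0 ≤ b) (ht : t ∈ Set.Icc a (a + b)) :
    ∃ s ∈ Set.Icc (0 : ℝ) 1, t = a + b * s := by
  rcases hb.eq_or_lt with rfl | hb
  · exact ⟨0, by simp, by linarith [ht.1, ht.2]⟩
  · refine ⟨(t - a) / b, ⟨div_nonneg (by linarith [ht.1]) hb.le, ?_⟩, by field_simp; ring⟩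
    rw [div_le_one hb]
    linarith [ht.2]

theorem stmt5_general {K : ℕ} (p : ℝ) (hp : p ∈ Set.Icc (0 : ℝ) 1)
    (μobs : Fin K → ℝ) :
    (∀ μmis : Fin K → ℝ, IsDist μmis → ∀ k : Fin (K - 1),
      p * cdf μobs (emb k) ≤ cdf (fun i => p * μobs i + (1 - p) * μmis i) (emb k) ∧
      cdf (fun i => p * μobs i + (1 - p) * μmis i) (emb k) ≤ p * cdf μobs (emb k) + (1 - p)) ∧
    (∀ k : Fin (K - 1),
      ∀ t ∈ Set.Icc (p * cdf μobs (emb k)) (p * cdf μobs (emb k) + (1 - p)),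
      ∃ μmis : Fin K → ℝ, IsDist μmis ∧
        cdf (fun i => p * μobs i + (1 - p) * μmis i) (emb k) = t) := by
  have hq : 0 ≤ 1 - p := sub_nonneg.2 hp.2
  refine ⟨fun μmis hmis k => ?_, fun k t ht => ?_⟩
  · rw [cdf_mix]
    have h0 := mul_nonneg hq (hmis.cdf_nonneg (emb k))
    have h1 := mul_le_mul_of_nonneg_left (hmis.cdf_le_one (emb k)) hq
    constructor <;> linarith
  · obtain ⟨s, hs, rfl⟩ := exists_mem_Icc_eq_add_mul hq ht
    have hk_lt_last : emb k < ⟨K - 1, Nat.sub_lt (k.pos.trans_le (Nat.sub_le K 1)) one_pos⟩ :=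
      Fin.mk_lt_mk.2 k.isLt
    obtain ⟨μmis, hmis, hcdf⟩ := exists_isDist_cdf_eq hk_lt_last hs
    exact ⟨μmis, hmis, by rw [cdf_mix, hcdf]⟩

/-- worst-case CDF bounds under missing data, and their sharpness. -/
theorem stmt5 {K : ℕ} (p : ℝ) (hp : p ∈ Set.Icc (0 : ℝ) 1)
    (μobs : Fin K → ℝ) (hobs : IsDist μobs) :
    (∀ μmis : Fin K → ℝ, IsDist μmis → ∀ k : Fin (K - 1),
      p * cdf μobs (emb k) ≤ cdf (fun i => p * μobs i + (1 - p) * μmis i) (emb k) ∧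
      cdf (fun i => p * μobs i + (1 - p) * μmis i) (emb k) ≤ p * cdf μobs (emb k) + (1 - p)) ∧
    (∀ k : Fin (K - 1),
      ∀ t ∈ Set.Icc (p * cdf μobs (emb k)) (p * cdf μobs (emb k) + (1 - p)),
      ∃ μmis : Fin K → ℝ, IsDist μmis ∧
        cdf (fun i => p * μobs i + (1 - p) * μmis i) (emb k) = t) :=
  stmt5_general p hp μobs
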